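/- arXiv:2208.07934 — 2 statements merged into one kernel-verified Lean document; each statement's English description precedes it below -/
import Mathlib

section
/- For random vectors X in R^d and Y in R^e with joint characteristic function φ_{X,Y}(α,β) = E[exp(i(αᵀX + βᵀY))] and marginal characteristic functions φ_X, φ_Y, one has for all α, β: |φ_{X,Y}(α,β) − φ_X(α)φ_Y(β)|² ≤ (1 − |φ_X(α)|²)(1 − |φ_Y(β)|²). -/
/-
With `F := f - 𝔼 f` and `G := g - 𝔼 g` one has `𝔼[F G] = 𝔼[f g] - 𝔼 f 𝔼 g` and
`𝔼 ‖F‖² = 𝔼 ‖f‖² - ‖𝔼 f‖²`, so Cauchy–Schwarz for `𝔼[F G]` is the covariance inequality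
`‖𝔼[f g] - 𝔼 f 𝔼 g‖² ≤ (𝔼 ‖f‖² - ‖𝔼 f‖²) (𝔼 ‖g‖² - ‖𝔼 g‖²)`. Applied to the unimodular
`f = exp (i αᵀX)` and `g = exp (i βᵀY)`, for which `𝔼 ‖f‖² = 𝔼 ‖g‖² = 1`, it is the theorem.
-/

open MeasureTheory ProbabilityTheory Filter Topology Complex Matrix

noncomputable def charFn {Ω : Type*} [MeasurableSpace Ω] (μ : Measure Ω)
    {d : ℕ} (X : Ω → (Fin d → ℝ)) (t : Fin d → ℝ) : ℂ :=
  ∫ ω, Complex.exp (Complex.I * ((∑ i, t i * X ω i : ℝ) : ℂ)) ∂μ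

noncomputable def jointCharFn {Ω : Type*} [MeasurableSpace Ω] (μ : Measure Ω)
    {d e : ℕ} (X : Ω → (Fin d → ℝ)) (Y : Ω → (Fin e → ℝ))
    (α : Fin d → ℝ) (β : Fin e → ℝ) : ℂ :=
  ∫ ω, Complex.exp (Complex.I * (((∑ i, α i * X ω i) + (∑ j, β j * Y ω j) : ℝ) : ℂ)) ∂μ

open scoped ComplexConjugate

namespace MeasureTheory

variable {Ω 𝕜 : Type*} [MeasurableSpace Ω] {μ : Measure Ω} [RCLike 𝕜] {f g : Ω → 𝕜}

lemma sq_norm_integral_mul_le (hf : MemLp f 2 μ) (hg : MemLp g 2 μ) :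
    ‖∫ ω, f ω * g ω ∂μ‖ ^ 2 ≤ (∫ ω, ‖f ω‖ ^ 2 ∂μ) * ∫ ω, ‖g ω‖ ^ 2 ∂μ := by
  have holder := integral_mul_norm_le_Lp_mul_Lq (μ := μ) Real.HolderConjugate.two_two
    (by simpa using hf) (by simpa using hg)
  rw [← Real.sqrt_eq_rpow, ← Real.sqrt_eq_rpow,
    ← Real.sqrt_mul (integral_nonneg fun ω ↦ by positivity)] at holder
  simp only [Real.rpow_two] at holder
  calc ‖∫ ω, f ω * g ω ∂μ‖ ^ 2 ≤ (∫ ω, ‖f ω‖ * ‖g ω‖ ∂μ) ^ 2 := by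
        gcongr
        simpa only [norm_mul] using norm_integral_le_integral_norm (fun ω ↦ f ω * g ω)
    _ ≤ _ := by
        refine (pow_le_pow_left₀ (integral_nonneg fun ω ↦ by positivity) holder 2).trans_eq ?_
        exact Real.sq_sqrt (mul_nonneg (integral_nonneg fun ω ↦ by positivity)
          (integral_nonneg fun ω ↦ by positivity))

lemma memLp_exp_I_mul_ofReal [IsFiniteMeasure μ] {φ : Ω → ℝ} (hφ : AEMeasurable φ μ)
    (p : ENNReal) : MemLp (fun ω ↦ exp (I * φ ω)) p μ :=
  MemLp.of_bound (by fun_prop) 1 (ae_of_all _ fun ω ↦ (norm_exp_I_mul_ofReal _).le)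

variable [IsProbabilityMeasure μ]

lemma integral_sub_integral_mul_sub_integral (hf : Integrable f μ) (hg : Integrable g μ)
    (hfg : Integrable (fun ω ↦ f ω * g ω) μ) :
    ∫ ω, (f ω - ∫ ω, f ω ∂μ) * (g ω - ∫ ω, g ω ∂μ) ∂μ =
      ∫ ω, f ω * g ω ∂μ - (∫ ω, f ω ∂μ) * ∫ ω, g ω ∂μ := by
  set a := ∫ ω, f ω ∂μ
  set b := ∫ ω, g ω ∂μ
  have expand : ∀ ω, (f ω - a) * (g ω - b) = (f ω * g ω - b * f ω) - (a * g ω - a * b) :=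
    fun ω ↦ by ring
  simp_rw [expand]
  rw [integral_sub (by fun_prop) (by fun_prop), integral_sub hfg (by fun_prop),
    integral_sub (by fun_prop) (by fun_prop), integral_const_mul, integral_const_mul,
    integral_const]
  simp only [probReal_univ, one_smul]
  ring

lemma integral_norm_sub_integral_sq (hf : MemLp f 2 μ) :
    ∫ ω, ‖f ω - ∫ ω, f ω ∂μ‖ ^ 2 ∂μ = ∫ ω, ‖f ω‖ ^ 2 ∂μ - ‖∫ ω, f ω ∂μ‖ ^ 2 := by
  set c := ∫ ω, f ω ∂μ
  have hf_int : Integrable f μ := hf.integrable one_le_two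
  have hf_sq : Integrable (fun ω ↦ ‖f ω‖ ^ 2) μ := hf.integrable_norm_pow two_ne_zero
  have expand : ∀ ω, ‖f ω - c‖ ^ 2 = ‖f ω‖ ^ 2 + ‖c‖ ^ 2 - 2 * RCLike.re (f ω * conj c) :=
    fun ω ↦ by simp only [← RCLike.normSq_eq_def', RCLike.normSq_sub]
  have hre : Integrable (fun ω ↦ RCLike.re (f ω * conj c)) μ := (hf_int.mul_const _).re
  simp_rw [expand]
  rw [integral_sub (by fun_prop) (hre.const_mul 2),
    integral_add hf_sq (integrable_const _), integral_const_mul,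
    integral_re (hf_int.mul_const _), integral_mul_const, RCLike.mul_conj, integral_const]
  simp only [probReal_univ, one_smul, ← RCLike.ofReal_pow, RCLike.ofReal_re]
  ring

lemma sq_norm_integral_mul_sub_le (hf : MemLp f 2 μ) (hg : MemLp g 2 μ) :
    ‖∫ ω, f ω * g ω ∂μ - (∫ ω, f ω ∂μ) * ∫ ω, g ω ∂μ‖ ^ 2 ≤
      (∫ ω, ‖f ω‖ ^ 2 ∂μ - ‖∫ ω, f ω ∂μ‖ ^ 2) * (∫ ω, ‖g ω‖ ^ 2 ∂μ - ‖∫ ω, g ω ∂μ‖ ^ 2) := by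
  rw [← integral_sub_integral_mul_sub_integral (hf.integrable one_le_two)
      (hg.integrable one_le_two) (hf.integrable_mul hg),
    ← integral_norm_sub_integral_sq hf, ← integral_norm_sub_integral_sq hg]
  exact sq_norm_integral_mul_le (hf.sub (memLp_const _)) (hg.sub (memLp_const _))

end MeasureTheory

lemma jointCharFn_eq_integral_mul {Ω : Type*} [MeasurableSpace Ω] (μ : Measure Ω)
    {d e : ℕ} (X : Ω → (Fin d → ℝ)) (Y : Ω → (Fin e → ℝ)) (α : Fin d → ℝ) (β : Fin e → ℝ) :
    jointCharFn μ X Y α β = ∫ ω, exp (I * ((∑ i, α i * X ω i : ℝ) : ℂ)) *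
      exp (I * ((∑ j, β j * Y ω j : ℝ) : ℂ)) ∂μ := by
  simp only [jointCharFn, ← exp_add, ofReal_add, mul_add]

theorem stmt0 {Ω : Type*} [MeasurableSpace Ω] (μ : Measure Ω) [IsProbabilityMeasure μ]
    {d e : ℕ} (X : Ω → (Fin d → ℝ)) (Y : Ω → (Fin e → ℝ))
    (hX : Measurable X) (hY : Measurable Y) (α : Fin d → ℝ) (β : Fin e → ℝ) :
    ‖jointCharFn μ X Y α β - charFn μ X α * charFn μ Y β‖ ^ 2 ≤
      (1 - ‖charFn μ X α‖ ^ 2) * (1 - ‖charFn μ Y β‖ ^ 2) := by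
  have hφ : Measurable fun ω ↦ ∑ i, α i * X ω i := by fun_prop
  have hψ : Measurable fun ω ↦ ∑ j, β j * Y ω j := by fun_prop
  have cov := sq_norm_integral_mul_sub_le (μ := μ) (memLp_exp_I_mul_ofReal hφ.aemeasurable 2)
    (memLp_exp_I_mul_ofReal hψ.aemeasurable 2)
  simp only [norm_exp_I_mul_ofReal, one_pow, integral_const, probReal_univ, one_smul] at cov
  rw [jointCharFn_eq_integral_mul]
  exact cov
end

section
/- Assuming the uniform ECF consistency theorem of Csörgő (if log T_n / n → 0 then sup_{‖γ‖<T_n}|φ(γ) − φ_n(γ)| → 0 a.s.), the KacIM estimator is consistent: if log T_n / n → 0 and T_n → ∞ then | κ(X,Y) − sup_{‖γ‖<T_n}|Δ_n(γ)| | → 0 almost surely. -/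
/-! By the triangle inequality `|‖Δ γ‖ - ‖Δₙ γ‖| ≤ ‖φ γ - φₙ γ‖ + ‖ψ γ - ψₙ γ‖`, so on the ball
`‖γ‖ < Tₙ` the suprema of `‖Δ‖` and `‖Δₙ‖` differ by at most the two ECF errors, which tend to `0`.
Since `Tₙ → ∞`, the balls exhaust the whole space and the supremum of `‖Δ‖` over them tends to `κ`. -/

open Filter Topology Set

lemma bddAbove_range_norm_sub {ι E : Type*} [SeminormedAddCommGroup E] {u v : ι → E} {C : ℝ}
    (hu : ∀ i, ‖u i‖ ≤ C) (hv : ∀ i, ‖v i‖ ≤ C) : BddAbove (range fun i => ‖u i - v i‖) :=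
  ⟨C + C, forall_mem_range.2 fun i => (norm_sub_le _ _).trans (add_le_add (hu i) (hv i))⟩

lemma abs_ciSup_sub_ciSup_le {ι : Sort*} [Nonempty ι] {f g : ι → ℝ} {c : ℝ}
    (hf : BddAbove (range f)) (hg : BddAbove (range g)) (h : ∀ i, |f i - g i| ≤ c) :
    |(⨆ i, f i) - ⨆ i, g i| ≤ c := by
  rw [abs_sub_le_iff, sub_le_iff_le_add, sub_le_iff_le_add]
  constructor
  · exact ciSup_le fun i => by linarith [(abs_sub_le_iff.1 (h i)).1, le_ciSup hg i]
  · exact ciSup_le fun i => by linarith [(abs_sub_le_iff.1 (h i)).2, le_ciSup hf i]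

lemma abs_ciSup_norm_sub_sub_ciSup_norm_sub_le {ι E : Type*} [Nonempty ι]
    [SeminormedAddCommGroup E] {u v u' v' : ι → E} {C : ℝ} (hu : ∀ i, ‖u i‖ ≤ C)
    (hv : ∀ i, ‖v i‖ ≤ C) (hu' : ∀ i, ‖u' i‖ ≤ C) (hv' : ∀ i, ‖v' i‖ ≤ C) :
    |(⨆ i, ‖u i - v i‖) - ⨆ i, ‖u' i - v' i‖| ≤ (⨆ i, ‖u i - u' i‖) + ⨆ i, ‖v i - v' i‖ := by
  refine abs_ciSup_sub_ciSup_le (bddAbove_range_norm_sub hu hv)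
    (bddAbove_range_norm_sub hu' hv') fun i => ?_
  calc |‖u i - v i‖ - ‖u' i - v' i‖| ≤ ‖u i - u' i‖ + ‖v i - v' i‖ := by
        simpa only [dist_eq_norm, Real.norm_eq_abs] using dist_dist_dist_le (u i) (v i) (u' i) (v' i)
    _ ≤ _ := add_le_add (le_ciSup (bddAbove_range_norm_sub hu hu') i)
        (le_ciSup (bddAbove_range_norm_sub hv hv') i)

lemma tendsto_ciSup_subtype_of_eventually {α ι : Type*} [Nonempty α] {l : Filter ι}
    {p : ι → α → Prop} {f : α → ℝ} (hf : BddAbove (range f)) (hp : ∀ x, ∀ᶠ i in l, p i x) :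
    Tendsto (fun i => ⨆ x : {x // p i x}, f x) l (𝓝 (⨆ x, f x)) := by
  refine tendsto_order.2 ⟨fun a ha => ?_, fun a ha => ?_⟩
  · obtain ⟨x, hx⟩ := exists_lt_of_lt_ciSup ha
    filter_upwards [hp x] with i hi
    exact hx.trans_le <| le_ciSup (hf.mono (range_comp_subset_range Subtype.val f)) ⟨x, hi⟩
  · obtain ⟨x⟩ := ‹Nonempty α›
    filter_upwards [hp x] with i hi
    have : Nonempty {x // p i x} := ⟨⟨x, hi⟩⟩
    exact (ciSup_le fun y : {x // p i x} => le_ciSup hf y.1).trans_lt ha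

theorem stmt12_general {m : ℕ} (φ ψ : (Fin m → ℝ) → ℂ) (φn ψn : ℕ → (Fin m → ℝ) → ℂ)
    (T : ℕ → ℝ) (hTtop : Tendsto T atTop atTop)
    (hφb : ∀ γ, ‖φ γ‖ ≤ 1) (hψb : ∀ γ, ‖ψ γ‖ ≤ 1)
    (hφnb : ∀ n γ, ‖φn n γ‖ ≤ 1) (hψnb : ∀ n γ, ‖ψn n γ‖ ≤ 1)
    (hφ : Tendsto (fun n => ⨆ γ : {γ : Fin m → ℝ // ‖γ‖ < T n},
        ‖φ γ.1 - φn n γ.1‖) atTop (𝓝 0))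
    (hψ : Tendsto (fun n => ⨆ γ : {γ : Fin m → ℝ // ‖γ‖ < T n},
        ‖ψ γ.1 - ψn n γ.1‖) atTop (𝓝 0)) :
    Tendsto (fun n => |(⨆ γ, ‖φ γ - ψ γ‖) -
        (⨆ γ : {γ : Fin m → ℝ // ‖γ‖ < T n},
          ‖φn n γ.1 - ψn n γ.1‖)|) atTop (𝓝 0) := by
  have hball : Tendsto (fun n => ⨆ γ : {γ : Fin m → ℝ // ‖γ‖ < T n}, ‖φ γ.1 - ψ γ.1‖) atTop
      (𝓝 (⨆ γ, ‖φ γ - ψ γ‖)) :=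
    tendsto_ciSup_subtype_of_eventually (p := fun n γ => ‖γ‖ < T n)
      (bddAbove_range_norm_sub hφb hψb) fun γ => hTtop.eventually_gt_atTop ‖γ‖
  have hgap : ∀ᶠ n in atTop,
      dist (⨆ γ : {γ : Fin m → ℝ // ‖γ‖ < T n}, ‖φ γ.1 - ψ γ.1‖)
        (⨆ γ : {γ : Fin m → ℝ // ‖γ‖ < T n}, ‖φn n γ.1 - ψn n γ.1‖) ≤
      (⨆ γ : {γ : Fin m → ℝ // ‖γ‖ < T n}, ‖φ γ.1 - φn n γ.1‖) +
        ⨆ γ : {γ : Fin m → ℝ // ‖γ‖ < T n}, ‖ψ γ.1 - ψn n γ.1‖ := by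
    filter_upwards [hTtop.eventually_gt_atTop 0] with n hn
    have : Nonempty {γ : Fin m → ℝ // ‖γ‖ < T n} := ⟨⟨0, by simpa using hn⟩⟩
    exact abs_ciSup_norm_sub_sub_ciSup_norm_sub_le (hφb ·.1) (hψb ·.1) (hφnb n ·.1) (hψnb n ·.1)
  have hsup := hball.congr_dist <|
    squeeze_zero' (.of_forall fun n => dist_nonneg) hgap (by simpa using hφ.add hψ)
  simpa using (hsup.const_sub (⨆ γ, ‖φ γ - ψ γ‖)).abs

theorem stmt12 {m : ℕ} (φ ψ : (Fin m → ℝ) → ℂ) (φn ψn : ℕ → (Fin m → ℝ) → ℂ)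
    (T : ℕ → ℝ) (hT0 : ∀ n, 0 < T n) (hTtop : Tendsto T atTop atTop)
    (hlog : Tendsto (fun n => Real.log (T n) / n) atTop (𝓝 0))
    (hφb : ∀ γ, ‖φ γ‖ ≤ 1) (hψb : ∀ γ, ‖ψ γ‖ ≤ 1)
    (hφnb : ∀ n γ, ‖φn n γ‖ ≤ 1) (hψnb : ∀ n γ, ‖ψn n γ‖ ≤ 1)
    (hφ : Tendsto (fun n => ⨆ γ : {γ : Fin m → ℝ // ‖γ‖ < T n},
        ‖φ γ.1 - φn n γ.1‖) atTop (𝓝 0))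
    (hψ : Tendsto (fun n => ⨆ γ : {γ : Fin m → ℝ // ‖γ‖ < T n},
        ‖ψ γ.1 - ψn n γ.1‖) atTop (𝓝 0)) :
    Tendsto (fun n => |(⨆ γ, ‖φ γ - ψ γ‖) -
        (⨆ γ : {γ : Fin m → ℝ // ‖γ‖ < T n},
          ‖φn n γ.1 - ψn n γ.1‖)|) atTop (𝓝 0) :=
  stmt12_general φ ψ φn ψn T hTtop hφb hψb hφnb hψnb hφ hψ
end
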